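/- Let A be an irreducible nonnegative real n×n matrix with Perron–Frobenius eigenvalue μ and Perron projection P = v uᵀ / (uᵀ v), where v, u are positive right and left eigenvectors for μ. Then P = adj(μI − A) / tr(adj(μI − A)). -/

import Mathlib

open Matrix Polynomial Finset

section Aux

variable {n : ℕ}

/-- Entries of powers of a nonnegative matrix are nonnegative. -/
lemma aux_pow_nonneg (A : Matrix (Fin n) (Fin n) ℝ) (h : ∀ i j, 0 ≤ A i j) :
    ∀ (m : ℕ) (i j : Fin n), 0 ≤ (A ^ m) i j := by
  intro m
  induction m with
  | zero =>
    intro i j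
    by_cases hij : i = j <;> simp [pow_zero, Matrix.one_apply, hij]
  | succ m ih =>
    intro i j
    rw [pow_succ, Matrix.mul_apply]
    exact Finset.sum_nonneg fun k _ => mul_nonneg (ih i k) (h k j)

lemma aux_pow_mulVec (A : Matrix (Fin n) (Fin n) ℝ) (μ : ℝ) (y : Fin n → ℝ)
    (h : A.mulVec y = μ • y) (m : ℕ) : (A ^ m).mulVec y = μ ^ m • y := by
  induction m with
  | zero => simp [Matrix.one_mulVec]
  | succ m ih =>
    rw [pow_succ, ← Matrix.mulVec_mulVec, h, Matrix.mulVec_smul, ih, smul_smul, pow_succ,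
      mul_comm]

/-- Uniqueness (up to scalar) of the positive eigenvector for irreducible nonnegative
matrices. -/
lemma aux_eig_unique (hn : 0 < n) (A : Matrix (Fin n) (Fin n) ℝ)
    (hnonneg : ∀ i j, 0 ≤ A i j)
    (hirr : ∀ i j, ∃ k : ℕ, 0 < (A ^ (k + 1)) i j)
    (μ : ℝ) (v : Fin n → ℝ) (hv : ∀ i, 0 < v i)
    (hAv : A.mulVec v = μ • v) (x : Fin n → ℝ)
    (hx : A.mulVec x = μ • x) : ∃ t : ℝ, x = t • v := by
  haveI : Nonempty (Fin n) := ⟨⟨0, hn⟩⟩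
  obtain ⟨i₀, -, hmin⟩ := Finset.exists_min_image Finset.univ (fun i => x i / v i)
    ⟨Classical.arbitrary _, Finset.mem_univ _⟩
  set t := x i₀ / v i₀ with ht
  set y := x - t • v with hy
  have hy0 : ∀ i, 0 ≤ y i := by
    intro i
    have h1 : t ≤ x i / v i := hmin i (Finset.mem_univ i)
    have h2 : t * v i ≤ (x i / v i) * v i :=
      mul_le_mul_of_nonneg_right h1 (le_of_lt (hv i))
    rw [div_mul_cancel₀ _ (ne_of_gt (hv i))] at h2
    simpa [hy, sub_nonneg] using h2
  have hyi₀ : y i₀ = 0 := by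
    simp [hy, ht, div_mul_cancel₀ _ (ne_of_gt (hv i₀))]
  have hAy : A.mulVec y = μ • y := by
    rw [hy, Matrix.mulVec_sub, Matrix.mulVec_smul, hx, hAv, smul_sub, smul_comm]
  have hyzero : y = 0 := by
    by_contra hne
    obtain ⟨j, hj⟩ := Function.ne_iff.mp hne
    have hyj : 0 < y j := lt_of_le_of_ne (hy0 j) (Ne.symm hj)
    obtain ⟨k, hk⟩ := hirr i₀ j
    have hpow := aux_pow_mulVec A μ y hAy (k + 1)
    have h0 : ((A ^ (k + 1)).mulVec y) i₀ = 0 := by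
      rw [hpow]; simp [hyi₀]
    have hpos : 0 < ((A ^ (k + 1)).mulVec y) i₀ := by
      rw [Matrix.mulVec, dotProduct]
      refine Finset.sum_pos' (fun l _ => mul_nonneg (aux_pow_nonneg A hnonneg _ i₀ l) (hy0 l))
        ⟨j, Finset.mem_univ j, mul_pos hk hyj⟩
    linarith
  refine ⟨t, ?_⟩
  have h' : x - t • v = 0 := hyzero
  rw [sub_eq_zero] at h'
  exact h'

end Aux

section AdjFormula

variable {n : ℕ}

/-- Explicit polynomial formula for the adjugate of `μ•1 - A`. -/
lemma aux_adj_formula (A : Matrix (Fin n) (Fin n) ℝ) (μ : ℝ) :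
    Matrix.adjugate (μ • (1 : Matrix (Fin n) (Fin n) ℝ) - A)
      = ∑ j ∈ Finset.range (A.charpoly.natDegree + 1), ∑ i ∈ Finset.range j,
          (A.charpoly.coeff j * μ ^ i) • A ^ (j - 1 - i) := by
  classical
  set χ := A.charpoly with hχ
  set Am : Matrix (Fin n) (Fin n) ℝ[X] := A.map C with hAm
  set Xm : Matrix (Fin n) (Fin n) ℝ[X] := (X : ℝ[X]) • 1 with hXm
  have hcomm : Commute Xm Am := by
    simp only [hXm, Commute, SemiconjBy, Matrix.smul_mul, Matrix.mul_smul, Matrix.one_mul,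
      Matrix.mul_one]
  have hchar : charmatrix A = Xm - Am := by
    ext i j
    by_cases h : i = j <;>
      simp [h, charmatrix_apply, hXm, hAm, Matrix.one_apply, Matrix.diagonal_apply]
  set D : Matrix (Fin n) (Fin n) ℝ[X] :=
    ∑ j ∈ Finset.range (χ.natDegree + 1), ∑ i ∈ Finset.range j,
      (C (χ.coeff j) * X ^ i) • Am ^ (j - 1 - i) with hD
  have hsmul_pow : ∀ (i : ℕ), Xm ^ i = (X : ℝ[X]) ^ i • (1 : Matrix (Fin n) (Fin n) ℝ[X]) := by
    intro i
    rw [hXm, _root_.smul_pow, one_pow]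
  have hDmul : D * charmatrix A = χ • (1 : Matrix (Fin n) (Fin n) ℝ[X]) := by
    rw [hchar, hD, Finset.sum_mul]
    have step : ∀ j ∈ Finset.range (χ.natDegree + 1),
        (∑ i ∈ Finset.range j, (C (χ.coeff j) * X ^ i) • Am ^ (j - 1 - i)) * (Xm - Am)
          = C (χ.coeff j) • (Xm ^ j - Am ^ j) := by
      intro j _
      have h1 : ∀ i, (C (χ.coeff j) * X ^ i) • Am ^ (j - 1 - i)
          = C (χ.coeff j) • (Xm ^ i * Am ^ (j - 1 - i)) := by
        intro i
        rw [mul_smul, hsmul_pow, Matrix.smul_mul, Matrix.one_mul]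
      simp_rw [h1, ← Finset.smul_sum, Matrix.smul_mul, hcomm.geom_sum₂_mul]
    rw [Finset.sum_congr rfl step]
    have hX : ∑ j ∈ Finset.range (χ.natDegree + 1), C (χ.coeff j) • Xm ^ j
        = χ • (1 : Matrix (Fin n) (Fin n) ℝ[X]) := by
      conv_rhs => rw [χ.as_sum_range_C_mul_X_pow]
      rw [Finset.sum_smul]
      refine Finset.sum_congr rfl fun j _ => ?_
      rw [hsmul_pow, smul_smul]
    have hA : ∑ j ∈ Finset.range (χ.natDegree + 1), C (χ.coeff j) • Am ^ j = 0 := by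
      have hpowmap : ∀ j : ℕ, Am ^ j = (A ^ j).map C := by
        intro j
        rw [hAm, ← RingHom.mapMatrix_apply, ← map_pow, RingHom.mapMatrix_apply]
      have h2 : ∀ j, C (χ.coeff j) • Am ^ j = ((χ.coeff j • A ^ j).map C) := by
        intro j
        ext i k
        simp [hpowmap, Matrix.map_apply, smul_eq_mul]
      simp_rw [h2]
      have h3 : ∑ j ∈ Finset.range (χ.natDegree + 1), ((χ.coeff j • A ^ j).map C)
          = (∑ j ∈ Finset.range (χ.natDegree + 1), χ.coeff j • A ^ j).map C := by
        ext i k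
        simp [Matrix.map_apply, Matrix.sum_apply]
      rw [h3, ← aeval_eq_sum_range, hχ, Matrix.aeval_self_charpoly]
      simp
    simp_rw [smul_sub]
    rw [Finset.sum_sub_distrib, hX, hA, sub_zero]
  have hadj : Matrix.adjugate (charmatrix A) = D := by
    have hzero : (Matrix.adjugate (charmatrix A) - D) * charmatrix A = 0 := by
      rw [Matrix.sub_mul, Matrix.adjugate_mul, hDmul]
      have : (charmatrix A).det = χ := rfl
      rw [this, sub_self]
    have hmul := congrArg (· * Matrix.adjugate (charmatrix A)) hzero
    simp only [Matrix.zero_mul] at hmul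
    rw [Matrix.mul_assoc, Matrix.mul_adjugate] at hmul
    have hdet : (charmatrix A).det = χ := rfl
    rw [hdet, Matrix.mul_smul, Matrix.mul_one] at hmul
    have hχ0 : χ ≠ 0 := A.charpoly_monic.ne_zero
    have : Matrix.adjugate (charmatrix A) - D = 0 := by
      refine Matrix.ext fun i k => ?_
      have := congrFun (congrFun hmul i) k
      simp only [Matrix.smul_apply, Matrix.zero_apply, smul_eq_mul] at this
      rcases mul_eq_zero.mp this with h | h
      · exact absurd h hχ0
      · rw [Matrix.sub_apply] at h
        rw [Matrix.sub_apply, Matrix.zero_apply]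
        exact h
    rw [← sub_eq_zero]
    exact this
  -- now map by evaluation at μ
  have hmapchar : (charmatrix A).map (eval μ) = μ • (1 : Matrix (Fin n) (Fin n) ℝ) - A := by
    ext i j
    by_cases h : i = j <;>
      simp [h, charmatrix_apply, Matrix.map_apply, Matrix.one_apply, Matrix.diagonal_apply]
  have hmapadj : Matrix.adjugate (μ • (1 : Matrix (Fin n) (Fin n) ℝ) - A)
      = (Matrix.adjugate (charmatrix A)).map (eval μ) := by
    rw [← hmapchar]
    have := (evalRingHom μ).map_adjugate (charmatrix A)
    simp only [RingHom.mapMatrix_apply] at this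
    exact this.symm
  rw [hmapadj, hadj, hD]
  refine Matrix.ext fun i k => ?_
  simp only [Matrix.map_apply, Matrix.sum_apply, Matrix.smul_apply, smul_eq_mul]
  rw [Polynomial.eval_finset_sum]
  refine Finset.sum_congr rfl fun j _ => ?_
  rw [Polynomial.eval_finset_sum]
  refine Finset.sum_congr rfl fun l _ => ?_
  have hpm : Am ^ (j - 1 - l) = (A ^ (j - 1 - l)).map C := by
    rw [hAm, ← RingHom.mapMatrix_apply, ← map_pow, RingHom.mapMatrix_apply]
  rw [hpm]
  simp [Matrix.map_apply]
  ring

end AdjFormula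

/-- For an irreducible nonnegative real matrix `A` with
Perron–Frobenius eigenvalue `μ` and Perron projection `P = v uᵀ / (uᵀ v)`,
one has `tr (adj (μI - A)) ≠ 0` and `P = adj (μI - A) / tr (adj (μI - A))`. -/
theorem stmt2 {n : ℕ} (A : Matrix (Fin n) (Fin n) ℝ)
    (hnonneg : ∀ i j, 0 ≤ A i j)
    (hirr : ∀ i j, ∃ k : ℕ, 0 < (A ^ (k + 1)) i j)
    (μ : ℝ) (hpos : 0 < μ)
    (hsimple : A.charpoly.rootMultiplicity μ = 1)
    (hdom : ∀ z : ℂ, (A.map Complex.ofReal).charpoly.IsRoot z → ‖z‖ ≤ μ)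
    (v u : Fin n → ℝ) (hv : ∀ i, 0 < v i) (hu : ∀ i, 0 < u i)
    (hAv : A.mulVec v = μ • v) (huA : Matrix.vecMul u A = μ • u) :
    Matrix.trace (Matrix.adjugate (μ • (1 : Matrix (Fin n) (Fin n) ℝ) - A)) ≠ 0 ∧
    (u ⬝ᵥ v)⁻¹ • Matrix.vecMulVec v u
      = (Matrix.trace (Matrix.adjugate (μ • (1 : Matrix (Fin n) (Fin n) ℝ) - A)))⁻¹ •
        Matrix.adjugate (μ • (1 : Matrix (Fin n) (Fin n) ℝ) - A) := by
  classical
  rcases Nat.eq_zero_or_pos n with hn0 | hn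
  · exfalso
    subst hn0
    have h1 : A.charpoly = 1 := by
      rw [Matrix.charpoly, Matrix.det_isEmpty]
    rw [h1, Polynomial.rootMultiplicity_eq_zero (by simp [Polynomial.IsRoot])] at hsimple
    exact one_ne_zero hsimple.symm
  haveI : Nonempty (Fin n) := ⟨⟨0, hn⟩⟩
  set χ := A.charpoly with hχdef
  have hχ0 : χ ≠ 0 := A.charpoly_monic.ne_zero
  have hroot : χ.IsRoot μ := (Polynomial.rootMultiplicity_pos hχ0).mp (by rw [hsimple]; norm_num)
  have hder : Polynomial.eval μ (Polynomial.derivative χ) ≠ 0 := by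
    intro h
    have h2 := (Polynomial.one_lt_rootMultiplicity_iff_isRoot hχ0).mpr ⟨hroot, h⟩
    rw [hsimple] at h2
    exact lt_irrefl 1 h2
  set B := μ • (1 : Matrix (Fin n) (Fin n) ℝ) - A with hB
  have hmapchar : (charmatrix A).map (eval μ) = B := by
    refine Matrix.ext fun i j => ?_
    by_cases h : i = j <;>
      simp [h, charmatrix_apply, Matrix.map_apply, Matrix.one_apply, Matrix.diagonal_apply, hB]
  have hdetB : B.det = 0 := by
    rw [← hmapchar]
    have : ((evalRingHom μ).mapMatrix (charmatrix A)).det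
        = evalRingHom μ (charmatrix A).det := (RingHom.map_det _ _).symm
    simp only [RingHom.mapMatrix_apply, Polynomial.coe_evalRingHom] at this
    rw [this]
    have hcp : (charmatrix A).det = χ := rfl
    rw [hcp]
    exact hroot
  set N := Matrix.adjugate B with hN
  have hBN : B * N = 0 := by rw [hN, Matrix.mul_adjugate, hdetB, zero_smul]
  have hNB : N * B = 0 := by rw [hN, Matrix.adjugate_mul, hdetB, zero_smul]
  have hBv : ∀ x : Fin n → ℝ, B.mulVec x = 0 → A.mulVec x = μ • x := by
    intro x hx
    rw [hB, Matrix.sub_mulVec, Matrix.smul_mulVec, Matrix.one_mulVec, sub_eq_zero] at hx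
    exact hx.symm
  -- columns of N are multiples of v
  have hcol : ∀ j, ∃ t : ℝ, (fun i => N i j) = t • v := by
    intro j
    apply aux_eig_unique hn A hnonneg hirr μ v hv hAv
    apply hBv
    funext i
    have h0 : (B * N) i j = 0 := by rw [hBN]; rfl
    rw [Matrix.mul_apply] at h0
    simpa [Matrix.mulVec, dotProduct] using h0
  choose c hc using hcol
  have hcv : ∀ i j, N i j = c j * v i := by
    intro i j
    have := congrFun (hc j) i
    simpa using this
  -- c is a left eigenvector
  set i₀ := Classical.arbitrary (Fin n) with hi₀
  have hvecc : ∀ j, ∑ k, c k * B k j = 0 := by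
    intro j
    have h0 : (N * B) i₀ j = 0 := by rw [hNB]; rfl
    rw [Matrix.mul_apply] at h0
    have h1 : ∑ k, N i₀ k * B k j = v i₀ * ∑ k, c k * B k j := by
      rw [Finset.mul_sum]
      refine Finset.sum_congr rfl fun k _ => ?_
      rw [hcv i₀ k]; ring
    rw [h1] at h0
    rcases mul_eq_zero.mp h0 with h | h
    · exact absurd h (ne_of_gt (hv i₀))
    · exact h
  have hBT : (μ • (1 : Matrix (Fin n) (Fin n) ℝ) - Aᵀ) = Bᵀ := by
    rw [hB, Matrix.transpose_sub, Matrix.transpose_smul, Matrix.transpose_one]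
  have hcBT : Bᵀ.mulVec c = 0 := by
    funext j
    simp only [Matrix.mulVec, dotProduct, Matrix.transpose_apply, Pi.zero_apply]
    rw [← hvecc j]
    exact Finset.sum_congr rfl fun k _ => mul_comm _ _
  have hATnn : ∀ i j, 0 ≤ Aᵀ i j := fun i j => hnonneg j i
  have hATirr : ∀ i j, ∃ k : ℕ, 0 < (Aᵀ ^ (k + 1)) i j := by
    intro i j
    obtain ⟨k, hk⟩ := hirr j i
    exact ⟨k, by rw [← Matrix.transpose_pow]; exact hk⟩
  have hAT : Aᵀ.mulVec u = μ • u := by rw [Matrix.mulVec_transpose, huA]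
  have hcB : Aᵀ.mulVec c = μ • c := by
    have : (μ • (1 : Matrix (Fin n) (Fin n) ℝ) - Aᵀ).mulVec c = 0 := by rw [hBT]; exact hcBT
    rw [Matrix.sub_mulVec, Matrix.smul_mulVec, Matrix.one_mulVec, sub_eq_zero] at this
    exact this.symm
  obtain ⟨s, hs⟩ := aux_eig_unique hn Aᵀ hATnn hATirr μ u hu hAT c hcB
  have hNform : ∀ i j, N i j = s * u j * v i := by
    intro i j
    have h2 : c j = s * u j := by simpa using congrFun hs j
    rw [hcv i j, h2]
  -- the key computation via the adjugate formula
  have hderiv_sum : Polynomial.eval μ (Polynomial.derivative χ)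
      = ∑ j ∈ Finset.range (χ.natDegree + 1), χ.coeff j * (j * μ ^ (j - 1)) := by
    rw [Polynomial.derivative_apply,
      χ.sum_over_range' (by simp) (χ.natDegree + 1) (lt_add_one _),
      Polynomial.eval_finset_sum]
    refine Finset.sum_congr rfl fun j _ => ?_
    simp [mul_assoc, mul_comm]
    ring
  have hNv : N.mulVec v = (Polynomial.eval μ (Polynomial.derivative χ)) • v := by
    rw [hN, hB, aux_adj_formula A μ]
    have hsum : ∀ (t : Finset ℕ) (f : ℕ → Matrix (Fin n) (Fin n) ℝ),
        (∑ j ∈ t, f j).mulVec v = ∑ j ∈ t, (f j).mulVec v := fun t f =>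
      map_sum (Matrix.mulVec.addMonoidHomLeft v) f t
    rw [hsum]
    rw [Finset.sum_congr rfl fun j _ => hsum (Finset.range j) _]
    rw [hderiv_sum, Finset.sum_smul]
    refine Finset.sum_congr rfl fun j hj => ?_
    have hterm : ∀ l ∈ Finset.range j,
        ((χ.coeff j * μ ^ l) • A ^ (j - 1 - l)).mulVec v
          = (χ.coeff j * μ ^ (j - 1)) • v := by
      intro l hl
      rw [Matrix.smul_mulVec, aux_pow_mulVec A μ v hAv, smul_smul]
      have hl' : l + (j - 1 - l) = j - 1 := by
        have := Finset.mem_range.mp hl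
        omega
      rw [mul_assoc, ← pow_add, hl']
    rw [Finset.sum_congr rfl hterm, Finset.sum_const, Finset.card_range]
    rw [← Nat.cast_smul_eq_nsmul ℝ, smul_smul]
    ring_nf
  -- compare the two expressions for N.mulVec v
  have hudv : (0:ℝ) < u ⬝ᵥ v :=
    Finset.sum_pos (fun i _ => mul_pos (hu i) (hv i)) Finset.univ_nonempty
  have hNv2 : ∀ i, (N.mulVec v) i = s * (u ⬝ᵥ v) * v i := by
    intro i
    simp only [Matrix.mulVec, dotProduct]
    rw [show ∑ k, N i k * v k = ∑ k, (s * v i) * (u k * v k) from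
      Finset.sum_congr rfl fun k _ => by rw [hNform i k]; ring]
    rw [← Finset.mul_sum]
    ring
  have hκ : Polynomial.eval μ (Polynomial.derivative χ) = s * (u ⬝ᵥ v) := by
    have e1 := congrFun hNv i₀
    rw [hNv2 i₀] at e1
    have e2 : Polynomial.eval μ (Polynomial.derivative χ) * v i₀ = s * (u ⬝ᵥ v) * v i₀ := by
      simpa using e1.symm
    exact mul_right_cancel₀ (ne_of_gt (hv i₀)) e2
  have htr : Matrix.trace N = s * (u ⬝ᵥ v) := by
    rw [Matrix.trace]
    simp only [Matrix.diag_apply]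
    rw [show ∑ i, N i i = ∑ i, s * (u i * v i) from
      Finset.sum_congr rfl fun i _ => by rw [hNform i i]; ring]
    rw [← Finset.mul_sum]
    simp only [dotProduct]
  have hs0 : s ≠ 0 := by
    intro h
    rw [h, zero_mul] at hκ
    exact hder hκ
  constructor
  · rw [htr, ← hκ]
    exact hder
  · rw [htr]
    refine Matrix.ext fun i j => ?_
    simp only [Matrix.smul_apply, Matrix.vecMulVec_apply, smul_eq_mul]
    rw [hNform i j]
    have huv0 : (u ⬝ᵥ v) ≠ 0 := ne_of_gt hudv
    field_simp
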